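/- arXiv:1502.07852 — 6 statements merged into one kernel-verified Lean document; each statement's English description precedes it below -/
import Mathlib

section
/- For every y ∈ ℝ, the cobracket δ_y on su(2,y) satisfies the cocycle identity δ_y([a,b]) = a·δ_y(b) − b·δ_y(a) for all a,b ∈ su(2,y), where x acts on su(2,y) ⊗ su(2,y) by x·(u⊗v) = [x,u]⊗v + u⊗[x,v], and the coJacobi identity: for every a ∈ su(2,y), the sum of (δ_y⊗id)(δ_y(a)) over the three cyclic permutations of the tensor factors of su(2,y)⊗su(2,y)⊗su(2,y) is zero. In other words, (su(2,y), δ_y) is a Lie bialgebra. -/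
open TensorProduct Complex Matrix

noncomputable section

abbrev M2 : Type := Matrix (Fin 2) (Fin 2) ℂ

def J1 : M2 := !![Complex.I, 0; 0, -Complex.I]
def J2 (y : ℝ) : M2 := !![0, 1; -(y : ℂ), 0]
def J3 (y : ℝ) : M2 := !![0, Complex.I; Complex.I * (y : ℂ), 0]

/-- The action of `x` on `M2 ⊗ M2` determined by `x·(u⊗v) = [x,u]⊗v + u⊗[x,v]`. -/
def act (x : M2) : M2 ⊗[ℝ] M2 →ₗ[ℝ] M2 ⊗[ℝ] M2 :=
  LinearMap.rTensor M2 (LinearMap.mulLeft ℝ x - LinearMap.mulRight ℝ x)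
    + LinearMap.lTensor M2 (LinearMap.mulLeft ℝ x - LinearMap.mulRight ℝ x)

/-- The cyclic permutation `a⊗b⊗c ↦ c⊗a⊗b` on `(M2 ⊗ M2) ⊗ M2`. -/
def cyc : (M2 ⊗[ℝ] M2) ⊗[ℝ] M2 →ₗ[ℝ] (M2 ⊗[ℝ] M2) ⊗[ℝ] M2 :=
  (TensorProduct.assoc ℝ M2 M2 M2).symm.toLinearMap ∘ₗ
    (TensorProduct.comm ℝ (M2 ⊗[ℝ] M2) M2).toLinearMap

/-!
Both identities are (bi)linear, so it suffices to check them on the generators `J1, J2, J3`.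
For the cocycle identity, antisymmetry leaves the three brackets `[J1,J2]`, `[J2,J3]`, `[J3,J1]`,
each a short computation in the tensor-product Lie module `M2 ⊗ M2`, on which `act x` is the
bracket with `x`. For coJacobi, every generator satisfies `δ x = J1 ⊗ x - x ⊗ J1` with
`δ J1 = 0`, so `(δ ⊗ id) (δ x) = x ⊗ J1 ⊗ J1 - J1 ⊗ x ⊗ J1`, whose cyclic sum vanishes.
-/

attribute [local instance] LieRing.ofAssociativeRing

open TensorProduct.LieModule

section LieAlgebra

variable {R L : Type*} [CommRing R] [LieRing L] [LieAlgebra R L]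

theorem cocycle_of_mem_span {δ : L →ₗ[R] L ⊗[R] L} {s : Set L}
    (h : ∀ a ∈ s, ∀ b ∈ s, δ ⁅a, b⁆ = ⁅a, δ b⁆ - ⁅b, δ a⁆) {a b : L}
    (ha : a ∈ Submodule.span R s) (hb : b ∈ Submodule.span R s) :
    δ ⁅a, b⁆ = ⁅a, δ b⁆ - ⁅b, δ a⁆ := by
  induction ha, hb using Submodule.span_induction₂ with
  | mem_mem a b ha hb => exact h a ha b hb
  | zero_left => simp
  | zero_right => simp
  | add_left a b c _ _ _ hac hbc =>
    simp only [add_lie, lie_add, map_add, hac, hbc]; abel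
  | add_right a b c _ _ _ hab hac =>
    simp only [add_lie, lie_add, map_add, hab, hac]; abel
  | smul_left r a b _ _ hab => simp only [smul_lie, lie_smul, map_smul, hab, smul_sub]
  | smul_right r a b _ _ hab => simp only [smul_lie, lie_smul, map_smul, hab, smul_sub]

theorem cocycle_swap {δ : L →ₗ[R] L ⊗[R] L} {a b : L}
    (h : δ ⁅a, b⁆ = ⁅a, δ b⁆ - ⁅b, δ a⁆) : δ ⁅b, a⁆ = ⁅b, δ a⁆ - ⁅a, δ b⁆ := by
  rw [← lie_skew, map_neg, h, neg_sub]

end LieAlgebra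

theorem act_eq_lie (x : M2) (t : M2 ⊗[ℝ] M2) : act x t = ⁅x, t⁆ := by
  induction t using TensorProduct.induction_on with
  | zero => simp
  | tmul u v => simp [act, Ring.lie_def, sub_tmul, tmul_sub]
  | add s t hs ht => simp [hs, ht]

theorem lie_J1_J2 (y : ℝ) : ⁅J1, J2 y⁆ = (2 : ℝ) • J3 y := by
  ext i j
  fin_cases i <;> fin_cases j <;> simp [Ring.lie_def, J1, J2, J3, Complex.ext_iff] <;> ring

theorem lie_J2_J3 (y : ℝ) : ⁅J2 y, J3 y⁆ = (2 * y) • J1 := by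
  ext i j
  fin_cases i <;> fin_cases j <;> simp [Ring.lie_def, J1, J2, J3, Complex.ext_iff] <;> ring

theorem lie_J3_J1 (y : ℝ) : ⁅J3 y, J1⁆ = (2 : ℝ) • J2 y := by
  ext i j
  fin_cases i <;> fin_cases j <;> simp [Ring.lie_def, J1, J2, J3, Complex.ext_iff] <;> ring

theorem cocycle_generators {y : ℝ} {δ : M2 →ₗ[ℝ] M2 ⊗[ℝ] M2} (h1 : δ J1 = 0)
    (h2 : δ (J2 y) = J1 ⊗ₜ[ℝ] J2 y - J2 y ⊗ₜ[ℝ] J1)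
    (h3 : δ (J3 y) = J1 ⊗ₜ[ℝ] J3 y - J3 y ⊗ₜ[ℝ] J1) :
    ∀ a ∈ ({J1, J2 y, J3 y} : Set M2), ∀ b ∈ ({J1, J2 y, J3 y} : Set M2),
      δ ⁅a, b⁆ = ⁅a, δ b⁆ - ⁅b, δ a⁆ := by
  have brackets : δ ⁅J1, J2 y⁆ = ⁅J1, δ (J2 y)⁆ - ⁅J2 y, δ J1⁆ ∧
      δ ⁅J2 y, J3 y⁆ = ⁅J2 y, δ (J3 y)⁆ - ⁅J3 y, δ (J2 y)⁆ ∧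
      δ ⁅J3 y, J1⁆ = ⁅J3 y, δ J1⁆ - ⁅J1, δ (J3 y)⁆ := by
    refine ⟨?_, ?_, ?_⟩ <;>
    · simp only [h1, h2, h3, lie_J1_J2, lie_J2_J3, lie_J3_J1, ← lie_skew (J2 y) J1,
        ← lie_skew (J3 y) (J2 y), ← lie_skew J1 (J3 y), map_smul, lie_zero, lie_sub,
        lie_tmul_right, lie_self, zero_tmul, tmul_zero, neg_tmul, tmul_neg, ← smul_tmul', tmul_smul]
      module
  obtain ⟨h12, h23, h31⟩ := brackets
  rintro a (rfl | rfl | rfl) b (rfl | rfl | rfl)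
  exacts [by simp, h12, cocycle_swap h31, cocycle_swap h12, by simp, h23, h31, cocycle_swap h23,
    by simp]

theorem cyc_tmul (a b c : M2) : cyc ((a ⊗ₜ[ℝ] b) ⊗ₜ[ℝ] c) = (c ⊗ₜ[ℝ] a) ⊗ₜ[ℝ] b := by
  simp [cyc]

def coJacobiator (δ : M2 →ₗ[ℝ] M2 ⊗[ℝ] M2) : M2 →ₗ[ℝ] (M2 ⊗[ℝ] M2) ⊗[ℝ] M2 :=
  (LinearMap.id + cyc + cyc ∘ₗ cyc) ∘ₗ LinearMap.rTensor M2 δ ∘ₗ δ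

theorem coJacobiator_eq_zero_of_eq_tmul_sub_tmul {δ : M2 →ₗ[ℝ] M2 ⊗[ℝ] M2} {e x : M2}
    (he : δ e = 0) (hx : δ x = e ⊗ₜ[ℝ] x - x ⊗ₜ[ℝ] e) : coJacobiator δ x = 0 := by
  simp only [coJacobiator, LinearMap.comp_apply, LinearMap.add_apply, LinearMap.id_apply, hx, he,
    map_sub, LinearMap.rTensor_tmul, zero_tmul, sub_tmul, cyc_tmul]
  abel

theorem coJacobiator_generators {y : ℝ} {δ : M2 →ₗ[ℝ] M2 ⊗[ℝ] M2} (h1 : δ J1 = 0)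
    (h2 : δ (J2 y) = J1 ⊗ₜ[ℝ] J2 y - J2 y ⊗ₜ[ℝ] J1)
    (h3 : δ (J3 y) = J1 ⊗ₜ[ℝ] J3 y - J3 y ⊗ₜ[ℝ] J1) :
    Set.EqOn (coJacobiator δ) 0 {J1, J2 y, J3 y} := by
  rintro x (rfl | rfl | rfl)
  exacts [coJacobiator_eq_zero_of_eq_tmul_sub_tmul h1 (by rw [h1, sub_self]),
    coJacobiator_eq_zero_of_eq_tmul_sub_tmul h1 h2, coJacobiator_eq_zero_of_eq_tmul_sub_tmul h1 h3]

/-- the cobracket `δ_y` on `su(2,y)` satisfies the cocycle identity and the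
coJacobi identity, i.e. `(su(2,y), δ_y)` is a Lie bialgebra. -/
theorem statement0 (y : ℝ) (δ : M2 →ₗ[ℝ] M2 ⊗[ℝ] M2)
    (h1 : δ J1 = 0)
    (h2 : δ (J2 y) = J1 ⊗ₜ[ℝ] J2 y - J2 y ⊗ₜ[ℝ] J1)
    (h3 : δ (J3 y) = J1 ⊗ₜ[ℝ] J3 y - J3 y ⊗ₜ[ℝ] J1) :
    (∀ a ∈ Submodule.span ℝ {J1, J2 y, J3 y}, ∀ b ∈ Submodule.span ℝ {J1, J2 y, J3 y},
      δ (a * b - b * a) = act a (δ b) - act b (δ a)) ∧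
    (∀ a ∈ Submodule.span ℝ {J1, J2 y, J3 y},
      (LinearMap.rTensor M2 δ) (δ a) + cyc ((LinearMap.rTensor M2 δ) (δ a))
        + cyc (cyc ((LinearMap.rTensor M2 δ) (δ a))) = 0) := by
  refine ⟨fun a ha b hb => ?_, fun a ha => ?_⟩
  · rw [act_eq_lie, act_eq_lie]
    exact cocycle_of_mem_span (cocycle_generators h1 h2 h3) ha hb
  · exact LinearMap.eqOn_span (f := coJacobiator δ) (g := 0) (coJacobiator_generators h1 h2 h3) ha
end
end

section
/- For every y ∈ ℝ, the real-linear map su(2,y)* → M₂(ℂ) sending Ĵ1 ↦ (1/2)!![-1,0;0,1], Ĵ2 ↦ (1/2)!![0,0;i,0], Ĵ3 ↦ (1/2)!![0,0;1,0] is an injective homomorphism of real Lie algebras (with su(2,y)* carrying the dual bracket and M₂(ℂ) the commutator bracket), whose image is exactly the set 𝔟 of lower-triangular complex 2×2 matrices with zero trace and real diagonal entries. In particular su(2,y)* is isomorphic as a real Lie algebra to 𝔟. -/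
open TensorProduct Complex Matrix

set_option synthInstance.maxHeartbeats 1000000

noncomputable section

/-- `su(2,y)`, the real span of `J1, J2(y), J3(y)` in `M₂(ℂ)`. -/
def V (y : ℝ) : Submodule ℝ M2 := Submodule.span ℝ {J1, J2 y, J3 y}

/-! By linearity `Φ f = borelMatrix (f b₀) (f b₁) (f b₂)`. The dual bracket `[ω, θ]` vanishes on
`b₀` and takes the values `ω₀θᵢ - ωᵢθ₀` on `bᵢ` (`i = 1, 2`), and a direct computation shows that
these are exactly the coordinates of the commutator of the two lower-triangular matrices. -/

theorem Module.Basis.apply_eq_sum_dualBasis {R M N ι : Type*} [CommRing R] [AddCommGroup M]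
    [Module R M] [AddCommGroup N] [Module R N] [Fintype ι] [DecidableEq ι]
    (b : Module.Basis ι R M) (Φ : Module.Dual R M →ₗ[R] N) (f : Module.Dual R M) :
    Φ f = ∑ i, f (b i) • Φ (b.dualBasis i) := by
  conv_lhs => rw [← b.dualBasis.sum_repr f]
  simp only [map_sum, _root_.map_smul, Module.Basis.dualBasis_repr]

theorem lid_map_tmul_sub_tmul {R M : Type*} [CommRing R] [AddCommGroup M] [Module R M]
    (ω θ : Module.Dual R M) (x z : M) :
    ((TensorProduct.lid R R).toLinearMap ∘ₗ TensorProduct.map ω θ) (x ⊗ₜ z - z ⊗ₜ x)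
      = ω x * θ z - ω z * θ x := by
  simp

/-- The image of `a Ĵ1 + u Ĵ2 + v Ĵ3`. -/
def borelMatrix (a u v : ℝ) : M2 :=
  !![-(a : ℂ) / 2, 0; ((u : ℂ) * Complex.I + v) / 2, (a : ℂ) / 2]

theorem borelMatrix_eq_zero_iff {a u v : ℝ} :
    borelMatrix a u v = 0 ↔ a = 0 ∧ u = 0 ∧ v = 0 := by
  refine ⟨fun h => ?_, by rintro ⟨rfl, rfl, rfl⟩; ext i j; fin_cases i <;> fin_cases j <;>
    simp [borelMatrix]⟩
  have h00 : (a : ℂ) = 0 := by simpa [borelMatrix] using congrFun (congrFun h 0) 0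
  have h10 : (u : ℂ) * I + v = 0 := by simpa [borelMatrix] using congrFun (congrFun h 1) 0
  exact ⟨by exact_mod_cast h00, by simpa using congrArg Complex.im h10,
    by simpa using congrArg Complex.re h10⟩

theorem borelMatrix_commutator (a u v a' u' v' : ℝ) :
    borelMatrix a u v * borelMatrix a' u' v' - borelMatrix a' u' v' * borelMatrix a u v
      = borelMatrix 0 (a * u' - u * a') (a * v' - v * a') := by
  ext i j
  fin_cases i <;> fin_cases j <;>
    simp [borelMatrix] <;> ring

theorem exists_borelMatrix_eq_iff (m : M2) :
    (∃ a u v : ℝ, borelMatrix a u v = m) ↔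
      m 0 1 = 0 ∧ m 0 0 + m 1 1 = 0 ∧ (m 0 0).im = 0 ∧ (m 1 1).im = 0 := by
  constructor
  · rintro ⟨a, u, v, rfl⟩
    refine ⟨?_, ?_, ?_, ?_⟩ <;> simp [borelMatrix, neg_div]
  · rintro ⟨h01, htr, him0, -⟩
    refine ⟨-2 * (m 0 0).re, 2 * (m 1 0).im, 2 * (m 1 0).re, ?_⟩
    have hm00 : m 0 0 = ((m 0 0).re : ℂ) := Complex.ext rfl (by simp [him0])
    have hm11 : m 1 1 = -((m 0 0).re : ℂ) := by rw [← hm00]; linear_combination htr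
    have hm10 : m 1 0 = ((m 1 0).re : ℂ) + ((m 1 0).im : ℂ) * Complex.I :=
      (Complex.re_add_im (m 1 0)).symm
    ext i j
    fin_cases i <;> fin_cases j <;> simp [borelMatrix]
    · exact hm00.symm
    · exact h01.symm
    · linear_combination -hm10
    · linear_combination -hm11

theorem statement2_general (y : ℝ)
    (b : Module.Basis (Fin 3) ℝ (V y))
    (δ : V y →ₗ[ℝ] (V y) ⊗[ℝ] (V y))
    (hδ1 : δ (b 0) = 0)
    (hδ2 : δ (b 1) = b 0 ⊗ₜ[ℝ] b 1 - b 1 ⊗ₜ[ℝ] b 0)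
    (hδ3 : δ (b 2) = b 0 ⊗ₜ[ℝ] b 2 - b 2 ⊗ₜ[ℝ] b 0)
    (Φ : Module.Dual ℝ (V y) →ₗ[ℝ] M2)
    (hΦ1 : Φ (b.dualBasis 0) = !![-(1/2 : ℂ), 0; 0, (1/2 : ℂ)])
    (hΦ2 : Φ (b.dualBasis 1) = !![0, 0; Complex.I / 2, 0])
    (hΦ3 : Φ (b.dualBasis 2) = !![0, 0; (1/2 : ℂ), 0]) :
    Function.Injective Φ ∧
    (∀ ω θ : Module.Dual ℝ (V y),
      Φ ((TensorProduct.lid ℝ ℝ).toLinearMap ∘ₗ TensorProduct.map ω θ ∘ₗ δ)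
        = Φ ω * Φ θ - Φ θ * Φ ω) ∧
    Set.range Φ = {m : M2 | m 0 1 = 0 ∧ m 0 0 + m 1 1 = 0 ∧
      (m 0 0).im = 0 ∧ (m 1 1).im = 0} := by
  have hΦ : ∀ f, Φ f = borelMatrix (f (b 0)) (f (b 1)) (f (b 2)) := by
    intro f
    rw [b.apply_eq_sum_dualBasis, Fin.sum_univ_three, hΦ1, hΦ2, hΦ3]
    ext i j
    fin_cases i <;> fin_cases j <;> simp [borelMatrix, Complex.real_smul] <;> ring
  refine ⟨?_, fun ω θ => ?_, ?_⟩
  · refine (injective_iff_map_eq_zero Φ).2 fun f hf => ?_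
    obtain ⟨h0, h1, h2⟩ := borelMatrix_eq_zero_iff.1 ((hΦ f).symm.trans hf)
    exact b.ext fun i => by fin_cases i <;> assumption
  · rw [hΦ, hΦ ω, hΦ θ, borelMatrix_commutator]
    simp only [LinearMap.comp_apply, hδ1, hδ2, hδ3, map_zero]
    simp only [← LinearMap.comp_apply, lid_map_tmul_sub_tmul]
  · ext m
    rw [Set.mem_ofPred_eq, ← exists_borelMatrix_eq_iff]
    constructor
    · rintro ⟨f, rfl⟩
      exact ⟨_, _, _, (hΦ f).symm⟩
    · rintro ⟨a, u, v, rfl⟩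
      refine ⟨b.constr ℝ ![a, u, v], ?_⟩
      simp [hΦ]

/-- the real-linear map `su(2,y)* → M₂(ℂ)` sending the dual basis to the
indicated matrices is an injective Lie algebra homomorphism (dual bracket on the source,
commutator on the target) with image the lower-triangular trace-zero matrices with real
diagonal. -/
theorem statement2 (y : ℝ)
    (b : Module.Basis (Fin 3) ℝ (V y))
    (hb1 : (b 0 : M2) = J1) (hb2 : (b 1 : M2) = J2 y) (hb3 : (b 2 : M2) = J3 y)
    (δ : V y →ₗ[ℝ] (V y) ⊗[ℝ] (V y))
    (hδ1 : δ (b 0) = 0)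
    (hδ2 : δ (b 1) = b 0 ⊗ₜ[ℝ] b 1 - b 1 ⊗ₜ[ℝ] b 0)
    (hδ3 : δ (b 2) = b 0 ⊗ₜ[ℝ] b 2 - b 2 ⊗ₜ[ℝ] b 0)
    (Φ : Module.Dual ℝ (V y) →ₗ[ℝ] M2)
    (hΦ1 : Φ (b.dualBasis 0) = !![-(1/2 : ℂ), 0; 0, (1/2 : ℂ)])
    (hΦ2 : Φ (b.dualBasis 1) = !![0, 0; Complex.I / 2, 0])
    (hΦ3 : Φ (b.dualBasis 2) = !![0, 0; (1/2 : ℂ), 0]) :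
    Function.Injective Φ ∧
    (∀ ω θ : Module.Dual ℝ (V y),
      Φ ((TensorProduct.lid ℝ ℝ).toLinearMap ∘ₗ TensorProduct.map ω θ ∘ₗ δ)
        = Φ ω * Φ θ - Φ θ * Φ ω) ∧
    Set.range Φ = {m : M2 | m 0 1 = 0 ∧ m 0 0 + m 1 1 = 0 ∧
      (m 0 0).im = 0 ∧ (m 1 1).im = 0} :=
  statement2_general y b δ hδ1 hδ2 hδ3 Φ hΦ1 hΦ2 hΦ3
end
end

section
/- For y > 0, conjugation m ↦ d m d⁻¹ by d = diag(y^{1/4}, y^{−1/4}) restricts to an isomorphism of real Lie algebras from su(2,y) onto su(2) = {m ∈ M₂(ℂ) : mᴴ = −m and tr(m) = 0}. For y < 0, conjugation by d = diag(|y|^{1/4}, |y|^{−1/4}) restricts to an isomorphism of real Lie algebras from su(2,y) onto su(1,1) = {m ∈ M₂(ℂ) : mᴴη + ηm = 0 and tr(m) = 0}, where η = diag(1,−1). -/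
open Complex Matrix

noncomputable section

/-- `su(2) = {m : mᴴ = −m, tr m = 0}`. -/
def su2Set : Set M2 := {m | m.conjTranspose = -m ∧ m.trace = 0}

/-- `su(1,1) = {m : mᴴη + ηm = 0, tr m = 0}` with `η = diag(1,−1)`. -/
def su11Set : Set M2 :=
  {m | m.conjTranspose * !![1, 0; 0, -1] + !![1, 0; 0, -1] * m = 0 ∧ m.trace = 0}

/-! Conjugation by `diag(a, a⁻¹)` multiplies the off-diagonal entries of a matrix by `a²` and `a⁻²`
respectively. If `a⁴ ε = y` it therefore fixes `J1` and sends `J2 y`, `J3 y` to `a² • J2 ε`,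
`a² • J3 ε`, so it maps `su(2,y)` onto `su(2,ε)`; with `a = |y|^{1/4}` the parameter becomes
`ε = sign y`. Finally `su(2,1)` and `su(2,-1)` are exactly `su(2)` and `su(1,1)`: both sides are cut
out by the same real linear conditions on the entries. Being conjugation by an invertible matrix,
the map is injective and preserves commutators. -/

section Conjugation

variable {A : Type*} [Ring A] {a b : A}

theorem conj_mul_conj_of_mul_eq_one (h : b * a = 1) (m n : A) :
    a * m * b * (a * n * b) = a * (m * n) * b := by
  calc a * m * b * (a * n * b) = a * m * (b * a) * n * b := by simp only [mul_assoc]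
    _ = a * (m * n) * b := by rw [h, mul_one, mul_assoc a m n]

theorem conj_commutator_of_mul_eq_one (h : b * a = 1) (m n : A) :
    a * (m * n - n * m) * b = a * m * b * (a * n * b) - a * n * b * (a * m * b) := by
  rw [conj_mul_conj_of_mul_eq_one h, conj_mul_conj_of_mul_eq_one h, ← sub_mul, ← mul_sub]

theorem conj_injective_of_mul_eq_one (h : b * a = 1) : Function.Injective fun m => a * m * b := by
  intro m n (hmn : a * m * b = a * n * b)
  calc m = b * a * m * (b * a) := by rw [h, one_mul, mul_one]
    _ = b * (a * m * b) * a := by simp only [mul_assoc]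
    _ = b * (a * n * b) * a := by rw [hmn]
    _ = b * a * n * (b * a) := by simp only [mul_assoc]
    _ = n := by rw [h, one_mul, mul_one]

end Conjugation

theorem mem_V_iff {ε : ℝ} {m : M2} :
    m ∈ V ε ↔ m 1 1 = -m 0 0 ∧ (m 0 0).re = 0 ∧
      (m 1 0).re = -ε * (m 0 1).re ∧ (m 1 0).im = ε * (m 0 1).im := by
  rw [V, Submodule.mem_span_triple]
  constructor
  · rintro ⟨a, b, c, rfl⟩
    simp [J1, J2, J3, mul_comm]
  · rintro ⟨h11, h00, h10re, h10im⟩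
    refine ⟨(m 0 0).im, (m 0 1).re, (m 0 1).im, ?_⟩
    ext i j
    fin_cases i <;> fin_cases j <;> apply Complex.ext <;>
      simp [J1, J2, J3, h11, h00, h10re, h10im, mul_comm]

theorem su2Set_eq_V_one : su2Set = V 1 := by
  ext m
  rw [SetLike.mem_coe, mem_V_iff]
  simp only [su2Set, Set.mem_ofPred_eq, ← Matrix.ext_iff, Fin.forall_fin_two, Matrix.neg_apply,
    conjTranspose_apply, RCLike.star_def, trace_fin_two, Complex.ext_iff, add_re, add_im, neg_re,
    neg_im, conj_re, conj_im, zero_re, zero_im]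
  grind

theorem su11Set_eq_V_neg_one : su11Set = V (-1) := by
  ext m
  rw [SetLike.mem_coe, mem_V_iff]
  simp only [su11Set, Set.mem_ofPred_eq, ← Matrix.ext_iff, Fin.forall_fin_two, Matrix.add_apply,
    Matrix.mul_apply, Fin.sum_univ_two, conjTranspose_apply, RCLike.star_def, Matrix.zero_apply,
    trace_fin_two, of_apply, cons_val_zero, cons_val_one, zero_mul, mul_one, mul_zero, mul_neg,
    neg_mul, Complex.ext_iff, add_re, add_im, neg_re, neg_im, conj_re, conj_im, zero_re, zero_im]
  grind

def diagScale (a : ℝ) : M2 := !![(a : ℂ), 0; 0, ((a⁻¹ : ℝ) : ℂ)]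

section diagScale

variable {a : ℝ} (ha : a ≠ 0)
include ha

theorem diagScale_inv_mul : diagScale a⁻¹ * diagScale a = 1 := by
  ext i j
  fin_cases i <;> fin_cases j <;> simp [diagScale, ha]

theorem inv_diagScale : (diagScale a)⁻¹ = diagScale a⁻¹ :=
  Matrix.inv_eq_left_inv (diagScale_inv_mul ha)

theorem diagScale_conj (m : M2) :
    diagScale a * m * (diagScale a)⁻¹ =
      !![m 0 0, (a : ℂ) ^ 2 * m 0 1; m 1 0 / (a : ℂ) ^ 2, m 1 1] := by
  have ha' : (a : ℂ) ≠ 0 := by exact_mod_cast ha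
  rw [inv_diagScale ha]
  ext i j
  fin_cases i <;> fin_cases j <;>
    simp [diagScale, Matrix.mul_apply, Fin.sum_univ_two, Matrix.vecMul, dotProduct] <;> field_simp

theorem diagScale_conj_J1 : diagScale a * J1 * (diagScale a)⁻¹ = J1 := by
  rw [diagScale_conj ha]
  ext i j
  fin_cases i <;> fin_cases j <;> simp [J1]

variable {y ε : ℝ} (hε : a ^ 4 * ε = y)
include hε

theorem diagScale_conj_J2 : diagScale a * J2 y * (diagScale a)⁻¹ = (a ^ 2) • J2 ε := by
  have ha' : (a : ℂ) ≠ 0 := by exact_mod_cast ha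
  rw [diagScale_conj ha, ← hε]
  ext i j
  fin_cases i <;> fin_cases j <;> simp [J2]
  field_simp

theorem diagScale_conj_J3 : diagScale a * J3 y * (diagScale a)⁻¹ = (a ^ 2) • J3 ε := by
  have ha' : (a : ℂ) ≠ 0 := by exact_mod_cast ha
  rw [diagScale_conj ha, ← hε]
  ext i j
  fin_cases i <;> fin_cases j <;> simp [J3]
  field_simp

theorem image_diagScale_conj_V :
    (fun m => diagScale a * m * (diagScale a)⁻¹) '' (V y : Set M2) = V ε := by
  have hconj : (fun m => diagScale a * m * (diagScale a)⁻¹) =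
      LinearMap.mulLeftRight ℝ (diagScale a, (diagScale a)⁻¹) := rfl
  have hunit : IsUnit (a ^ 2) := (pow_ne_zero 2 ha).isUnit
  rw [hconj, ← Submodule.map_coe, V, Submodule.map_span, Set.image_insert_eq,
    Set.image_insert_eq, Set.image_singleton]
  simp only [LinearMap.mulLeftRight_apply, diagScale_conj_J1 ha, diagScale_conj_J2 ha hε,
    diagScale_conj_J3 ha hε, V, Submodule.span_insert, Submodule.span_singleton_smul_eq hunit]

theorem diagScale_conj_isLieIso :
    (∀ (r : ℝ) (m n : M2), diagScale a * (r • m + n) * (diagScale a)⁻¹ =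
      r • (diagScale a * m * (diagScale a)⁻¹) + diagScale a * n * (diagScale a)⁻¹) ∧
    Set.BijOn (fun m => diagScale a * m * (diagScale a)⁻¹) (V y : Set M2) (V ε : Set M2) ∧
    (∀ m ∈ (V y : Set M2), ∀ n ∈ (V y : Set M2),
      diagScale a * (m * n - n * m) * (diagScale a)⁻¹ =
        diagScale a * m * (diagScale a)⁻¹ * (diagScale a * n * (diagScale a)⁻¹) -
          diagScale a * n * (diagScale a)⁻¹ * (diagScale a * m * (diagScale a)⁻¹)) := by
  have hinv : (diagScale a)⁻¹ * diagScale a = 1 := by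
    rw [inv_diagScale ha]; exact diagScale_inv_mul ha
  refine ⟨fun r m n => ?_, ?_, fun m _ n _ => conj_commutator_of_mul_eq_one hinv m n⟩
  · rw [mul_add, add_mul, mul_smul_comm, smul_mul_assoc]
  · rw [← image_diagScale_conj_V ha hε]
    exact (conj_injective_of_mul_eq_one hinv).injOn.bijOn_image

end diagScale

/-- for `y > 0` conjugation by `diag(y^{1/4}, y^{−1/4})` is a real Lie algebra
isomorphism from `su(2,y)` onto `su(2)`; for `y < 0` conjugation by
`diag(|y|^{1/4}, |y|^{−1/4})` is a real Lie algebra isomorphism from `su(2,y)` onto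
`su(1,1)`. -/
theorem statement4 (y : ℝ) :
    (0 < y →
      ∀ d : M2, d = !![((y ^ ((1:ℝ)/4) : ℝ) : ℂ), 0; 0, (((y ^ ((1:ℝ)/4))⁻¹ : ℝ) : ℂ)] →
        (∀ (r : ℝ) (m n : M2), d * (r • m + n) * d⁻¹ = r • (d * m * d⁻¹) + d * n * d⁻¹) ∧
        Set.BijOn (fun m => d * m * d⁻¹) (V y : Set M2) su2Set ∧
        (∀ m ∈ (V y : Set M2), ∀ n ∈ (V y : Set M2),
          d * (m * n - n * m) * d⁻¹
            = (d * m * d⁻¹) * (d * n * d⁻¹) - (d * n * d⁻¹) * (d * m * d⁻¹))) ∧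
    (y < 0 →
      ∀ d : M2, d = !![((|y| ^ ((1:ℝ)/4) : ℝ) : ℂ), 0; 0, (((|y| ^ ((1:ℝ)/4))⁻¹ : ℝ) : ℂ)] →
        (∀ (r : ℝ) (m n : M2), d * (r • m + n) * d⁻¹ = r • (d * m * d⁻¹) + d * n * d⁻¹) ∧
        Set.BijOn (fun m => d * m * d⁻¹) (V y : Set M2) su11Set ∧
        (∀ m ∈ (V y : Set M2), ∀ n ∈ (V y : Set M2),
          d * (m * n - n * m) * d⁻¹
            = (d * m * d⁻¹) * (d * n * d⁻¹) - (d * n * d⁻¹) * (d * m * d⁻¹))) := by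
  have quarter_pow_four {x : ℝ} (hx : 0 ≤ x) : (x ^ ((1:ℝ)/4)) ^ 4 = x := by
    simpa using Real.rpow_inv_natCast_pow hx (n := 4) (by norm_num)
  refine ⟨fun hy d hd => ?_, fun hy d hd => ?_⟩
  · rw [hd, su2Set_eq_V_one]
    exact diagScale_conj_isLieIso (Real.rpow_pos_of_pos hy _).ne'
      (by rw [quarter_pow_four hy.le, mul_one])
  · rw [hd, su11Set_eq_V_neg_one]
    exact diagScale_conj_isLieIso (Real.rpow_pos_of_pos (abs_pos.2 hy.ne) _).ne'
      (by rw [quarter_pow_four (abs_nonneg y), abs_of_neg hy, neg_mul_neg, mul_one])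
end
end

section
/- For every y ≠ 0, the real-linear map from su_ext(y) to the product Lie algebra su(2,y) × ℝ (with ℝ abelian) determined by J0 ↦ (0, 1), J1 ↦ (J1, −1/y), J2 ↦ (J2(y), 0), J3 ↦ (J3(y), 0) is an isomorphism of real Lie algebras. -/
open Complex Matrix

noncomputable section

/-- The underlying 4-dimensional real vector space of `su_ext(y)`. -/
abbrev V4 : Type := Fin 4 → ℝ

/-- The standard basis `(J0, J1, J2, J3)` of `su_ext(y)`. -/
def e (i : Fin 4) : V4 := Pi.single i 1

/-!
In coordinates `f v = (v₁ J1 + v₂ J2 y + v₃ J3 y, v₀ - v₁ / y)`. The matrices `J1, J2 y, J3 y`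
are linearly independent over `ℝ` (look at the first row), so `f` is injective, and its image is
`span {J1, J2 y, J3 y} × ℝ` since `v₀` adjusts the second coordinate freely. Both
`(u, v) ↦ f [u, v]` and `(u, v) ↦ ([f u, f v], 0)` are antisymmetric bilinear maps, so they agree
as soon as they agree on pairs `(Jᵢ, Jⱼ)` with `i < j`. The only case that is not a plain matrix
commutator is `[J2, J3] = 2y J1 + 2 J0`, whose central component `2y · (-1/y) + 2` vanishes: this
is what the shift `-1/y` in the image of `J1` is for.
-/

theorem LinearMap.ext_basis_of_antisymm {ι R M N : Type*} [LinearOrder ι] [CommSemiring R]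
    [AddCommMonoid M] [AddCommGroup N] [Module R M] [Module R N] (b : Module.Basis ι R M)
    {B C : M →ₗ[R] M →ₗ[R] N} (hB : ∀ u v, B u v = -B v u) (hC : ∀ u v, C u v = -C v u)
    (hdiag : ∀ i, B (b i) (b i) = C (b i) (b i))
    (hlt : ∀ i j, i < j → B (b i) (b j) = C (b i) (b j)) : B = C := by
  refine LinearMap.ext_basis b b fun i j => ?_
  rcases lt_trichotomy i j with hij | rfl | hji
  · exact hlt i j hij
  · exact hdiag i
  · rw [hB, hC, hlt j i hji]

lemma J1_mul_J2_sub (y : ℝ) : J1 * J2 y - J2 y * J1 = (2 : ℝ) • J3 y := by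
  ext i j; fin_cases i <;> fin_cases j <;>
    simp [J1, J2, J3, Complex.real_smul] <;> ring

lemma J2_mul_J3_sub (y : ℝ) : J2 y * J3 y - J3 y * J2 y = (2 * y : ℝ) • J1 := by
  ext i j; fin_cases i <;> fin_cases j <;>
    simp [J1, J2, J3, Complex.real_smul] <;> ring

lemma J1_mul_J3_sub (y : ℝ) : J1 * J3 y - J3 y * J1 = -(2 : ℝ) • J2 y := by
  ext i j; fin_cases i <;> fin_cases j <;>
    simp [J1, J2, J3, Complex.real_smul, mul_comm _ I, ← mul_assoc] <;> ring

lemma smul_J_add_eq_zero_iff (y a b c : ℝ) :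
    a • J1 + b • J2 y + c • J3 y = 0 ↔ a = 0 ∧ b = 0 ∧ c = 0 := by
  refine ⟨fun h => ?_, by rintro ⟨rfl, rfl, rfl⟩; simp⟩
  have h00 := congrFun (congrFun h 0) 0
  have h01 := congrFun (congrFun h 0) 1
  simp [J1, J2, J3, Complex.real_smul, Complex.ext_iff] at h00 h01
  exact ⟨h00, h01⟩

def toProd (y : ℝ) (v : V4) : M2 × ℝ :=
  (v 1 • J1 + v 2 • J2 y + v 3 • J3 y, v 0 - v 1 / y)

lemma toProd_eq_zero {y : ℝ} {v : V4} (hv : toProd y v = 0) : v = 0 := by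
  obtain ⟨hm, hs⟩ := Prod.mk_eq_zero.mp hv
  obtain ⟨h1, h2, h3⟩ := (smul_J_add_eq_zero_iff y _ _ _).mp hm
  rw [h1, zero_div, sub_zero] at hs
  funext i; fin_cases i <;> assumption

lemma range_toProd (y : ℝ) :
    Set.range (toProd y) = {p : M2 × ℝ | p.1 ∈ Submodule.span ℝ {J1, J2 y, J3 y}} := by
  ext ⟨m, s⟩
  simp only [Set.mem_range, Set.mem_ofPred_eq, Submodule.mem_span_triple]
  constructor
  · rintro ⟨v, hv⟩
    exact ⟨v 1, v 2, v 3, congrArg Prod.fst hv⟩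
  · rintro ⟨a, b, c, rfl⟩
    refine ⟨![s + a / y, a, b, c], ?_⟩
    simp [toProd]

lemma apply_eq_toProd (y : ℝ) (f : V4 →ₗ[ℝ] M2 × ℝ)
    (hf0 : f (e 0) = (0, 1))
    (hf1 : f (e 1) = (J1, -1/y))
    (hf2 : f (e 2) = (J2 y, 0))
    (hf3 : f (e 3) = (J3 y, 0)) (v : V4) : f v = toProd y v := by
  have hv : v = v 0 • e 0 + v 1 • e 1 + v 2 • e 2 + v 3 • e 3 := by
    funext j; fin_cases j <;> simp [e]
  conv_lhs => rw [hv]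
  simp only [map_add, map_smul, hf0, hf1, hf2, hf3, toProd, Prod.smul_mk, Prod.mk_add_mk,
    smul_zero, smul_eq_mul, Prod.mk.injEq]
  constructor
  · abel
  · ring

lemma basisFun_eq_e (i : Fin 4) : Pi.basisFun ℝ (Fin 4) i = e i := Pi.basisFun_apply ℝ (Fin 4) i

lemma map_bracket {y : ℝ} (hy : y ≠ 0)
    (B : V4 →ₗ[ℝ] V4 →ₗ[ℝ] V4)
    (hskew : ∀ u v : V4, B u v = - B v u)
    (h12 : B (e 1) (e 2) = (2 : ℝ) • e 3)
    (h23 : B (e 2) (e 3) = (2 * y) • e 1 + (2 : ℝ) • e 0)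
    (h31 : B (e 3) (e 1) = (2 : ℝ) • e 2)
    (h0 : ∀ i : Fin 4, B (e 0) (e i) = 0)
    (f : V4 →ₗ[ℝ] M2 × ℝ)
    (hf0 : f (e 0) = (0, 1))
    (hf1 : f (e 1) = (J1, -1/y))
    (hf2 : f (e 2) = (J2 y, 0))
    (hf3 : f (e 3) = (J3 y, 0)) (u v : V4) :
    f (B u v) = ((f u).1 * (f v).1 - (f v).1 * (f u).1, 0) := by
  let fM : V4 →ₗ[ℝ] M2 := LinearMap.fst ℝ M2 ℝ ∘ₗ f
  let C : V4 →ₗ[ℝ] V4 →ₗ[ℝ] M2 × ℝ :=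
    ((LinearMap.mul ℝ M2 - (LinearMap.mul ℝ M2).flip).compl₁₂ fM fM).compr₂
      (LinearMap.inl ℝ M2 ℝ)
  have hC : ∀ u v, C u v = ((f u).1 * (f v).1 - (f v).1 * (f u).1, 0) := fun _ _ => rfl
  have hBC : B.compr₂ f = C := by
    refine LinearMap.ext_basis_of_antisymm (Pi.basisFun ℝ (Fin 4)) (fun u v => ?_) (fun u v => ?_)
      (fun i => ?_) (fun i j hij => ?_)
    · simp only [LinearMap.compr₂_apply, hskew u v, map_neg]
    · simp only [hC, neg_sub, Prod.neg_mk, neg_zero]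
    · have hBii : B (e i) (e i) = 0 := self_eq_neg.mp (hskew _ _)
      simp only [basisFun_eq_e, LinearMap.compr₂_apply, hBii, map_zero, hC, sub_self,
        Prod.mk_zero_zero]
    · simp only [basisFun_eq_e, LinearMap.compr₂_apply, hC]
      have hf23 : f (B (e 2) (e 3)) = ((2 * y) • J1, 0) := by
        rw [h23, map_add, map_smul, map_smul, hf1, hf0, Prod.smul_mk, Prod.smul_mk,
          Prod.mk_add_mk]
        congr 1
        · simp
        · rw [smul_eq_mul, smul_eq_mul]; field_simp; ring
      fin_cases i <;> fin_cases j <;> simp at hij <;>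
        simp [Prod.ext_iff, h0, h12, hf0, hf1, hf23, hskew (e 1) (e 3), h31, hf2, hf3,
          J1_mul_J2_sub, J2_mul_J3_sub, J1_mul_J3_sub]
  exact (LinearMap.congr_fun₂ hBC u v).trans (hC u v)

/-- for `y ≠ 0` the real-linear map `su_ext(y) → su(2,y) × ℝ` determined by
`J0 ↦ (0,1)`, `J1 ↦ (J1, −1/y)`, `J2 ↦ (J2(y), 0)`, `J3 ↦ (J3(y), 0)` is an isomorphism of
real Lie algebras, where `su(2,y) × ℝ` carries the bracket `[(m,s),(n,t)] = ([m,n],0)`. -/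
theorem statement7 (y : ℝ) (hy : y ≠ 0)
    (B : V4 →ₗ[ℝ] V4 →ₗ[ℝ] V4)
    (hskew : ∀ u v : V4, B u v = - B v u)
    (h12 : B (e 1) (e 2) = (2 : ℝ) • e 3)
    (h23 : B (e 2) (e 3) = (2 * y) • e 1 + (2 : ℝ) • e 0)
    (h31 : B (e 3) (e 1) = (2 : ℝ) • e 2)
    (h0 : ∀ i : Fin 4, B (e 0) (e i) = 0)
    (f : V4 →ₗ[ℝ] M2 × ℝ)
    (hf0 : f (e 0) = (0, 1))
    (hf1 : f (e 1) = (J1, -1/y))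
    (hf2 : f (e 2) = (J2 y, 0))
    (hf3 : f (e 3) = (J3 y, 0)) :
    Function.Injective f ∧
    Set.range f = {p : M2 × ℝ | p.1 ∈ Submodule.span ℝ {J1, J2 y, J3 y}} ∧
    (∀ u v : V4, f (B u v) = ((f u).1 * (f v).1 - (f v).1 * (f u).1, 0)) := by
  have hf : ⇑f = toProd y := funext (apply_eq_toProd y f hf0 hf1 hf2 hf3)
  refine ⟨(injective_iff_map_eq_zero f).2 fun v hv => toProd_eq_zero (y := y) ?_,
    by rw [hf, range_toProd], map_bracket hy B hskew h12 h23 h31 h0 f hf0 hf1 hf2 hf3⟩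
  rwa [hf] at hv
end
end

section
/- Let a₁, a₂ ∈ ℂ be nonzero and b₁, b₂ ∈ ℂ. Then the function y ↦ (1/y)·Arg( (a₁a₂ − y·b₁·conj(b₂)) / (a₁a₂) ), defined for real y ≠ 0 small enough, tends to Im( − b₁·conj(b₂) / (a₁a₂) ) as y → 0 along nonzero real values. (This expresses that Ω_0(g,h) = lim_{y→0} Ω_y(g,h), since for g,h of the form !![aᵢ,bᵢ; −y·conj(bᵢ), conj(aᵢ)] the (1,1) entry of gh equals a₁a₂ − y·b₁·conj(b₂).) -/
open Complex Filter

noncomputable section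

/-
The quotient equals `1 + y c` with `c = -b₁ conj b₂ / (a₁ a₂)`. Since `arg = Im ∘ log` and
`y ↦ log (1 + y c)` has derivative `c` at `0`, the difference quotients `(1/y) arg (1 + y c)`
are the imaginary parts of the slopes of this logarithm, which tend to `Im c`.
-/

theorem hasDerivAt_log_one_add_ofReal_mul (c : ℂ) :
    HasDerivAt (fun y : ℝ => log (1 + (y : ℂ) * c)) c 0 := by
  have hlin : HasDerivAt (fun y : ℝ => 1 + (y : ℂ) * c) c 0 := by
    simpa using ((ofRealCLM.hasDerivAt (x := (0 : ℝ))).mul_const c).const_add 1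
  simpa using hlin.clog_real (by simp)

theorem tendsto_inv_mul_arg_one_add_ofReal_mul (c : ℂ) :
    Tendsto (fun y : ℝ => (1 / y) * arg (1 + (y : ℂ) * c)) (nhdsWithin 0 {(0 : ℝ)}ᶜ)
      (nhds c.im) := by
  have hslope := hasDerivAt_iff_tendsto_slope.mp (hasDerivAt_log_one_add_ofReal_mul c)
  refine ((continuous_im.tendsto c).comp hslope).congr fun y => ?_
  simp [slope_def_module, log_im, one_div]

/-- for nonzero `a₁, a₂ ∈ ℂ` and `b₁, b₂ ∈ ℂ`, the function
`y ↦ (1/y)·Arg((a₁a₂ − y·b₁·conj b₂)/(a₁a₂))` tends to `Im(−b₁·conj b₂/(a₁a₂))` as `y → 0`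
along nonzero real values; this expresses `Ω_0(g,h) = lim_{y→0} Ω_y(g,h)`. -/
theorem statement14 (a₁ a₂ : ℂ) (ha₁ : a₁ ≠ 0) (ha₂ : a₂ ≠ 0) (b₁ b₂ : ℂ) :
    Tendsto
      (fun y : ℝ =>
        (1 / y) * Complex.arg ((a₁ * a₂ - (y : ℂ) * b₁ * (starRingEnd ℂ) b₂) / (a₁ * a₂)))
      (nhdsWithin 0 {(0 : ℝ)}ᶜ)
      (nhds ((-(b₁ * (starRingEnd ℂ) b₂) / (a₁ * a₂)).im)) := by
  have hquot : ∀ y : ℝ, (a₁ * a₂ - (y : ℂ) * b₁ * (starRingEnd ℂ) b₂) / (a₁ * a₂)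
      = 1 + (y : ℂ) * (-(b₁ * (starRingEnd ℂ) b₂) / (a₁ * a₂)) := by
    intro y
    field_simp
    ring
  simpa only [hquot] using tendsto_inv_mul_arg_one_add_ofReal_mul _
end
end

section
/- Let y ∈ ℝ, y ≠ 0, and let w ∈ ℂ with w² = y. Then, as s → 0 along positive real values, (1/s)·( φ2(−√s)·φ3(−√s)·φ2(√s)·φ3(√s) − I₂ ) tends to 2y·!![i,0;0,-i] in M₂(ℂ). (This is the group-commutator computation showing [J2,J3] has matrix part 2y·J1.) -/
open Complex Matrix Filter

noncomputable section

/-- `φ2(t) = !![cos(wt), w⁻¹ sin(wt); −w sin(wt), cos(wt)]`. -/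
def phi2 (w : ℂ) (t : ℝ) : M2 :=
  !![Complex.cos (w * t), w⁻¹ * Complex.sin (w * t);
     -w * Complex.sin (w * t), Complex.cos (w * t)]

/-- `φ3(t) = !![cos(wt), i w⁻¹ sin(wt); i w sin(wt), cos(wt)]`. -/
def phi3 (w : ℂ) (t : ℝ) : M2 :=
  !![Complex.cos (w * t), Complex.I * w⁻¹ * Complex.sin (w * t);
     Complex.I * w * Complex.sin (w * t), Complex.cos (w * t)]

/-! Write `φ2(t) = cos(wt) + sin(wt) A` and `φ3(t) = cos(wt) + sin(wt) B` with
`A = !![0, w⁻¹; -w, 0]` and `B = !![0, i w⁻¹; i w, 0]`. These are anticommuting square roots of `-1`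
(so `φ2(t) = exp(wtA)`, `φ3(t) = exp(wtB)`) with `AB = !![i, 0; 0, -i]`. For such a pair the group
commutator is exactly `1 + s²(2(c² - 1) + 2c²AB + 2cs(B - A))` with `c = cos(wt)`, `s = sin(wt)`;
dividing by `t²` and using `sin(wt)/t → w`, `cos(wt) → 1`, `sin(wt) → 0`, only `2w²AB` survives. -/

open scoped Topology

section Algebraic

variable {K R : Type*} [CommRing K] [Ring R] [Algebra K R] {A B : R}

theorem group_commutator_sub_one (hA : A * A = -1) (hB : B * B = -1) (hAB : B * A = -(A * B))
    {c s : K} (hcs : s ^ 2 + c ^ 2 = 1) :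
    (c • 1 - s • A) * (c • 1 - s • B) * (c • 1 + s • A) * (c • 1 + s • B) - 1 =
      s ^ 2 • ((2 * (c ^ 2 - 1)) • 1 + (2 * c ^ 2) • (A * B) + (2 * c * s) • (B - A)) := by
  have hA' (X : R) : A * (A * X) = -X := by rw [← mul_assoc, hA, neg_one_mul]
  simp only [mul_add, add_mul, sub_mul, mul_sub, smul_mul_assoc, mul_smul_comm, one_mul, mul_one,
    mul_assoc, hA, hB, hAB, hA', mul_neg, neg_mul, smul_neg, neg_neg]
  linear_combination (norm := module) (c ^ 2 - s ^ 2 + 1) • congrArg (· • (1 : R)) hcs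

end Algebraic

theorem tendsto_sin_mul_div (w : ℂ) :
    Tendsto (fun t : ℝ => Complex.sin (w * t) / t) (𝓝[≠] 0) (𝓝 w) := by
  have h : HasDerivAt (fun z : ℂ => Complex.sin (w * z)) w (0 : ℝ) := by
    simpa using ((hasDerivAt_id (0 : ℂ)).const_mul w).csin
  simpa [div_eq_inv_mul] using h.comp_ofReal.tendsto_slope_zero

section Cis

variable {R : Type*} [Ring R] [Algebra ℂ R]

def cisWith (A : R) (z : ℂ) : R := Complex.cos z • 1 + Complex.sin z • A

theorem cisWith_neg (A : R) (z : ℂ) :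
    cisWith A (-z) = Complex.cos z • 1 - Complex.sin z • A := by
  rw [cisWith, Complex.cos_neg, Complex.sin_neg, neg_smul, ← sub_eq_add_neg]

variable [TopologicalSpace R] [IsTopologicalAddGroup R] [ContinuousSMul ℂ R] {A B : R}

theorem tendsto_group_commutator_cisWith (hA : A * A = -1) (hB : B * B = -1)
    (hAB : B * A = -(A * B)) (w : ℂ) :
    Tendsto (fun t : ℝ => ((t : ℂ) ^ 2)⁻¹ • (cisWith A (-(w * t)) * cisWith B (-(w * t))
        * cisWith A (w * t) * cisWith B (w * t) - 1)) (𝓝[≠] 0) (𝓝 ((2 * w ^ 2) • (A * B))) := by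
  have hc : Tendsto (fun t : ℝ => Complex.cos (w * t)) (𝓝[≠] 0) (𝓝 1) :=
    (Continuous.tendsto' (by fun_prop) 0 1 (by simp)).mono_left nhdsWithin_le_nhds
  have hs : Tendsto (fun t : ℝ => Complex.sin (w * t)) (𝓝[≠] 0) (𝓝 0) :=
    (Continuous.tendsto' (by fun_prop) 0 0 (by simp)).mono_left nhdsWithin_le_nhds
  have hlim := ((tendsto_sin_mul_div w).pow 2).smul
    (((((hc.pow 2).sub_const 1).const_mul 2).smul_const (1 : R)).add
      (((hc.pow 2).const_mul 2).smul_const (A * B)) |>.add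
      (((hc.const_mul 2).mul hs).smul_const (B - A)))
  convert hlim using 2 with t
  · rw [cisWith_neg, cisWith_neg, cisWith, cisWith,
      group_commutator_sub_one hA hB hAB (Complex.sin_sq_add_cos_sq _), smul_smul, div_pow,
      div_eq_inv_mul]
  · simp [smul_smul, mul_comm]

end Cis

def phi2Gen (w : ℂ) : M2 := !![0, w⁻¹; -w, 0]

def phi3Gen (w : ℂ) : M2 := !![0, Complex.I * w⁻¹; Complex.I * w, 0]

theorem phi2_eq_cisWith (w : ℂ) (t : ℝ) : phi2 w t = cisWith (phi2Gen w) (w * t) := by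
  ext i j; fin_cases i <;> fin_cases j <;> simp [phi2, phi2Gen, cisWith, mul_comm]

theorem phi3_eq_cisWith (w : ℂ) (t : ℝ) : phi3 w t = cisWith (phi3Gen w) (w * t) := by
  ext i j; fin_cases i <;> fin_cases j <;> simp [phi3, phi3Gen, cisWith, mul_comm]

section Generators

variable {w : ℂ}

theorem phi2Gen_mul_self (hw : w ≠ 0) : phi2Gen w * phi2Gen w = -1 := by
  ext i j; fin_cases i <;> fin_cases j <;> simp [phi2Gen, hw]

theorem phi3Gen_mul_self (hw : w ≠ 0) : phi3Gen w * phi3Gen w = -1 := by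
  ext i j; fin_cases i <;> fin_cases j <;> simp [phi3Gen] <;> field_simp <;> simp

theorem phi3Gen_mul_phi2Gen : phi3Gen w * phi2Gen w = -(phi2Gen w * phi3Gen w) := by
  ext i j; fin_cases i <;> fin_cases j <;> simp [phi2Gen, phi3Gen] <;> ring

theorem phi2Gen_mul_phi3Gen (hw : w ≠ 0) :
    phi2Gen w * phi3Gen w = !![Complex.I, 0; 0, -Complex.I] := by
  ext i j; fin_cases i <;> fin_cases j <;> simp [phi2Gen, phi3Gen] <;> field_simp

end Generators

/-- for `y ≠ 0` and `w² = y`, as `s → 0⁺`,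
`(1/s)·(φ2(−√s)φ3(−√s)φ2(√s)φ3(√s) − I₂)` tends to `2y·!![i,0;0,−i]`;
this is the group-commutator computation showing `[J2,J3]` has matrix part `2y·J1`. -/
theorem statement15 (y : ℝ) (hy : y ≠ 0) (w : ℂ) (hw : w ^ 2 = (y : ℂ)) :
    Tendsto
      (fun s : ℝ =>
        (1 / s) • (phi2 w (-Real.sqrt s) * phi3 w (-Real.sqrt s)
          * phi2 w (Real.sqrt s) * phi3 w (Real.sqrt s) - (1 : M2)))
      (nhdsWithin 0 (Set.Ioi (0 : ℝ)))
      (nhds ((2 * y) • !![Complex.I, 0; 0, -Complex.I])) := by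
  have hw0 : w ≠ 0 := by
    rintro rfl
    exact hy (by exact_mod_cast hw.symm.trans (zero_pow two_ne_zero))
  have hsqrt : Tendsto Real.sqrt (𝓝[>] 0) (𝓝[≠] 0) := by
    refine tendsto_nhdsWithin_of_tendsto_nhds_of_eventually_within _ ?_ ?_
    · simpa using (Real.continuous_sqrt.tendsto 0).mono_left nhdsWithin_le_nhds
    · filter_upwards [self_mem_nhdsWithin] with s hs using (Real.sqrt_pos.2 hs).ne'
  have hlim := (tendsto_group_commutator_cisWith (phi2Gen_mul_self hw0) (phi3Gen_mul_self hw0)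
    phi3Gen_mul_phi2Gen w).comp hsqrt
  rw [phi2Gen_mul_phi3Gen hw0, hw] at hlim
  have hsmul (r : ℝ) (M : M2) : r • M = (r : ℂ) • M := RCLike.real_smul_eq_coe_smul r M
  rw [hsmul]
  push_cast
  refine hlim.congr' ?_
  filter_upwards [self_mem_nhdsWithin] with s hs
  rw [Function.comp_apply, phi2_eq_cisWith, phi2_eq_cisWith, phi3_eq_cisWith, phi3_eq_cisWith,
    hsmul, ← Complex.ofReal_pow, Real.sq_sqrt hs.le]
  push_cast
  rw [mul_neg, one_div]
end
end
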